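/- arXiv:2406.02098 — 4 statements merged into one kernel-verified Lean document; each statement's English description precedes it below -/
import Mathlib

section
/- For every A > 0, T_crit(A) := sup{𝒯_H : H ∈ 𝒜_crit(A)} is finite. Moreover, lim sup_{A→0⁺} log(T_crit(A)) · A^{p−1} < ∞; equivalently, there exist A₀ > 0 and C > 0 such that for all A ∈ (0, A₀), every H ∈ 𝒜_crit(A) defined on [0, 𝒯_H) satisfies log(𝒯_H) ≤ C A^{−(p−1)}. -/
open Set

/-- One-sided first derivative on `[0, ∞)`. -/
noncomputable def Hd (H : ℝ → ℝ) : ℝ → ℝ := derivWithin H (Set.Ici 0)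

/-- One-sided second derivative on `[0, ∞)`. -/
noncomputable def Hdd (H : ℝ → ℝ) : ℝ → ℝ := derivWithin (Hd H) (Set.Ici 0)

/-- `H ∈ 𝒜_crit(A)` with (possibly infinite) existence time `S = 𝒯_H`:
`H` is `C²` on `[0, S)`, `H(0) = H'(0) = 0`, `H''(t) ≥ A (t+1)⁻¹` on `[0, S)`, and
`H''(t) ≥ (t+1)^{-(p+1)} (log (t+1))^{-(p-1)} H(t)^p` on `[T₀, S)`. -/
def MemAcrit (p T₀ A : ℝ) (H : ℝ → ℝ) (S : EReal) : Prop :=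
  0 < S ∧
  ContDiffOn ℝ 2 H {t : ℝ | 0 ≤ t ∧ (t : EReal) < S} ∧
  H 0 = 0 ∧ Hd H 0 = 0 ∧
  (∀ t : ℝ, 0 ≤ t → (t : EReal) < S → A * (t + 1)⁻¹ ≤ Hdd H t) ∧
  (∀ t : ℝ, T₀ ≤ t → (t : EReal) < S →
    (t + 1) ^ (-(p + 1)) * Real.log (t + 1) ^ (-(p - 1)) * H t ^ p ≤ Hdd H t)

/-!
On an interval `[0, b]` of existence, `H'' ≥ A/(t+1)` makes `H` convex with `H(0) = H'(0) = 0`,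
so `q(t) = H(t)/(t+1)` is nondecreasing and `q(e^s - 1) ≥ A s/2` for `s ≥ 2`.
Work in logarithmic time `σ = log (t+1)` on `[s, 2s]`. If `q ≥ μ` at `e^σ - 1`, then
`H ≥ μ (t+1)` on the window `[σ, σ + δ]`, where the nonlinear forcing raises `H'` by
`μ^p (2s)^{-(p-1)} δ`; convexity turns this slope into `q ≥ μ^p (2s)^{-(p-1)} δ²/(1+δ)`
at `σ + 2δ`.
The windows `δ_i = s 2^{-(i+2)}` fit infinitely often into `[s, 2s)`, and along them `log q` grows
doubly exponentially once `A^{p-1} s` exceeds a constant depending only on `p`. As `q` is bounded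
on `[0, e^{2s} - 1]`, `H` cannot exist up to `e^{2s}`; taking `s ≍ A^{-(p-1)}` gives both claims.
-/

open Filter Topology Real

structure HasDerivOnIcc (f f' : ℝ → ℝ) (a b : ℝ) : Prop where
  continuousOn : ContinuousOn f (Icc a b)
  hasDerivAt : ∀ t ∈ Ioo a b, HasDerivAt f (f' t) t

namespace HasDerivOnIcc

variable {f f' g g' : ℝ → ℝ} {a b c d : ℝ}

theorem of_hasDerivAt (h : ∀ t ∈ Icc a b, HasDerivAt f (f' t) t) : HasDerivOnIcc f f' a b :=
  ⟨fun t ht => (h t ht).continuousAt.continuousWithinAt,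
    fun t ht => h t (Ioo_subset_Icc_self ht)⟩

theorem mono (hf : HasDerivOnIcc f f' a b) (hac : a ≤ c) (hdb : d ≤ b) :
    HasDerivOnIcc f f' c d :=
  ⟨hf.continuousOn.mono (Icc_subset_Icc hac hdb),
    fun t ht => hf.hasDerivAt t (Ioo_subset_Ioo hac hdb ht)⟩

theorem sub (hf : HasDerivOnIcc f f' a b) (hg : HasDerivOnIcc g g' a b) :
    HasDerivOnIcc (f - g) (f' - g') a b :=
  ⟨hf.continuousOn.sub hg.continuousOn,
    fun t ht => (hf.hasDerivAt t ht).sub (hg.hasDerivAt t ht)⟩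

theorem monotoneOn (hf : HasDerivOnIcc f f' a b) (h : ∀ t ∈ Ioo a b, 0 ≤ f' t) :
    MonotoneOn f (Icc a b) :=
  monotoneOn_of_hasDerivWithinAt_nonneg (convex_Icc a b) hf.continuousOn
    (by simpa using fun t ht => (hf.hasDerivAt t ht).hasDerivWithinAt) (by simpa using h)

theorem sub_le_sub (hf : HasDerivOnIcc f f' a b) (hg : HasDerivOnIcc g g' a b) (hab : a ≤ b)
    (h : ∀ t ∈ Ioo a b, f' t ≤ g' t) : f b - f a ≤ g b - g a := by
  have := (hg.sub hf).monotoneOn (fun t ht => sub_nonneg.2 (h t ht))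
    (left_mem_Icc.2 hab) (right_mem_Icc.2 hab) hab
  simp only [Pi.sub_apply] at this
  linarith

theorem add_mul_le (hf : HasDerivOnIcc f f' a b) (hf' : MonotoneOn f' (Icc a b))
    {u v : ℝ} (hu : u ∈ Icc a b) (hv : v ∈ Icc a b) : f u + (v - u) * f' u ≤ f v := by
  have hlin : ∀ c d, HasDerivOnIcc (fun t => f' u * t) (fun _ => f' u) c d := fun c d =>
    of_hasDerivAt fun t _ => by simpa using (hasDerivAt_id t).const_mul (f' u)
  rcases le_total u v with huv | hvu
  · have := (hlin u v).sub_le_sub (hf.mono hu.1 hv.2) huv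
      fun t ht => hf' hu ⟨hu.1.trans ht.1.le, ht.2.le.trans hv.2⟩ ht.1.le
    linarith
  · have := (hf.mono hv.1 hu.2).sub_le_sub (hlin v u) hvu
      fun t ht => hf' ⟨hv.1.trans ht.1.le, ht.2.le.trans hu.2⟩ hu ht.2.le
    linarith

end HasDerivOnIcc

theorem hasDerivAt_log_add_one {t : ℝ} (ht : -1 < t) :
    HasDerivAt (fun t => log (t + 1)) (t + 1)⁻¹ t := by
  simpa using ((hasDerivAt_id t).add_const 1).log (by simp; linarith)

theorem hasDerivAt_mul_log_sub {t : ℝ} (ht : -1 < t) :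
    HasDerivAt (fun t => (t + 1) * log (t + 1) - t) (log (t + 1)) t := by
  refine ((((hasDerivAt_id' t).add_const 1).mul (hasDerivAt_log_add_one ht)).sub
    (hasDerivAt_id' t)).congr_deriv ?_
  rw [mul_inv_cancel₀ (by linarith)]
  ring

theorem tendsto_atTop_of_mul_sub_le {x : ℕ → ℝ} {p d k : ℝ} (hp : 1 < p) (hk : 0 ≤ k)
    (hx : ∀ i : ℕ, p * x i - d - k * i ≤ x (i + 1))
    (h0 : k / (p - 1) ^ 2 + d / (p - 1) < x 0) : Tendsto x atTop atTop := by
  have hp1 : 0 < p - 1 := by linarith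
  set α := k / (p - 1) with hα_def
  set β := k / (p - 1) ^ 2 + d / (p - 1) with hβ_def
  -- `y i = x i - α i - β` satisfies `p * y i ≤ y (i + 1)`
  have hα : (p - 1) * α = k := by rw [hα_def]; field_simp
  have hβ : (p - 1) * β = α + d := by rw [hβ_def, hα_def]; field_simp
  have hα0 : 0 ≤ α := div_nonneg hk hp1.le
  clear_value α β
  have hy : ∀ i : ℕ, p ^ i * (x 0 - β) ≤ x i - α * i - β := by
    intro i
    induction i with
    | zero => simp
    | succ i ih =>
      calc p ^ (i + 1) * (x 0 - β) = p * (p ^ i * (x 0 - β)) := by ring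
        _ ≤ p * (x i - α * i - β) := by gcongr
        _ ≤ x (i + 1) - α * ↑(i + 1) - β := by
          push_cast
          linear_combination hx i - (i : ℝ) * hα - hβ
  refine tendsto_atTop_mono (fun i => ?_) (tendsto_atTop_add_const_right _ β
    ((tendsto_pow_atTop_atTop_of_one_lt hp).atTop_mul_const (sub_pos.2 h0)))
  nlinarith [hy i, mul_nonneg hα0 (Nat.cast_nonneg (α := ℝ) i)]

theorem div_one_add_le_one_sub_exp_neg {δ : ℝ} (hδ : 0 ≤ δ) :
    δ / (1 + δ) ≤ 1 - exp (-δ) := by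
  have : exp (-δ) ≤ (1 + δ)⁻¹ := by
    rw [exp_neg]
    exact inv_anti₀ (by linarith) (by linarith [add_one_le_exp δ])
  have : δ / (1 + δ) = 1 - (1 + δ)⁻¹ := by field_simp; ring
  linarith

theorem mul_rpow_mul_inv_le {p L μ t h : ℝ} (hp : 1 ≤ p) (ht : 0 < t) (hL : log (t + 1) ≤ L)
    (hμ : 0 ≤ μ) (hh : μ * (t + 1) ≤ h) :
    μ ^ p * L ^ (-(p - 1)) * (t + 1)⁻¹ ≤
      (t + 1) ^ (-(p + 1)) * log (t + 1) ^ (-(p - 1)) * h ^ p := by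
  have ht1 : 0 < t + 1 := by linarith
  have hlog : 0 < log (t + 1) := log_pos (by linarith)
  have hpow : μ ^ p * (t + 1) ^ p ≤ h ^ p := by
    rw [← mul_rpow hμ ht1.le]
    exact rpow_le_rpow (by positivity) hh (by linarith)
  have hL' : L ^ (-(p - 1)) ≤ log (t + 1) ^ (-(p - 1)) :=
    rpow_le_rpow_of_nonpos hlog hL (by linarith)
  have hinv : (t + 1) ^ (-(p + 1)) * (t + 1) ^ p = (t + 1)⁻¹ := by
    rw [← rpow_add ht1, show -(p + 1) + p = -1 by ring, rpow_neg_one]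
  calc μ ^ p * L ^ (-(p - 1)) * (t + 1)⁻¹
      = (t + 1) ^ (-(p + 1)) * L ^ (-(p - 1)) * (μ ^ p * (t + 1) ^ p) := by rw [← hinv]; ring
    _ ≤ (t + 1) ^ (-(p + 1)) * log (t + 1) ^ (-(p - 1)) * h ^ p := by gcongr

theorem exp_sub_one_mem_Icc {x b : ℝ} (hx : 0 ≤ x) (hb : exp x - 1 ≤ b) :
    exp x - 1 ∈ Icc 0 b :=
  ⟨by linarith [add_one_le_exp x], hb⟩

theorem le_log_rpow_mul_sq_div {p s : ℝ} (hs : 2 ≤ s) (i : ℕ) :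
    -((p + 3) * log 2 + (p - 2) * log s) - 2 * log 2 * i ≤
      log ((2 * s) ^ (-(p - 1)) * ((s / 2 ^ (i + 2)) ^ 2 / (1 + s / 2 ^ (i + 2)))) := by
  have hs0 : 0 < s := by linarith
  have hδ : 0 < s / 2 ^ (i + 2) := by positivity
  have hδs : 1 + s / 2 ^ (i + 2) ≤ s := by
    have : (4 : ℝ) ≤ 2 ^ (i + 2) := by
      calc (4 : ℝ) = 2 ^ 2 := by norm_num
        _ ≤ 2 ^ (i + 2) := pow_le_pow_right₀ (by norm_num) (by omega)
    have : s / 2 ^ (i + 2) ≤ s / 4 := div_le_div_of_nonneg_left hs0.le (by norm_num) this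
    linarith
  have hlog := log_le_log (by positivity) hδs
  rw [log_mul (by positivity) (by positivity), log_div (by positivity) (by positivity),
    log_rpow (by positivity), log_mul two_ne_zero hs0.ne', log_pow,
    log_div hs0.ne' (by positivity), log_pow]
  push_cast
  nlinarith

/-- `A ^ (p - 1) * s > exp ((p - 1) * critConst p)` says that `log (A s / 2)` exceeds the threshold
of `tendsto_atTop_of_mul_sub_le` for `k = 2 log 2` and `d = (p + 3) log 2 + (p - 2) log s`,
the constants of `le_log_rpow_mul_sq_div`. -/
noncomputable def critConst (p : ℝ) : ℝ := log 2 * (1 + (p + 3) / (p - 1) + 2 / (p - 1) ^ 2)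

theorem lt_log_of_exp_critConst_lt {p A s : ℝ} (hp : 1 < p) (hA : 0 < A) (hs : 0 < s)
    (hsA : exp ((p - 1) * critConst p) < A ^ (p - 1) * s) :
    2 * log 2 / (p - 1) ^ 2 + ((p + 3) * log 2 + (p - 2) * log s) / (p - 1) <
      log (A * s / 2) := by
  have hp1 : 0 < p - 1 := by linarith
  have hlog := log_lt_log (exp_pos _) hsA
  rw [log_exp, log_mul (rpow_pos_of_pos hA _).ne' hs.ne', log_rpow hA] at hlog
  have key : log A + log s - log 2 -
      (2 * log 2 / (p - 1) ^ 2 + ((p + 3) * log 2 + (p - 2) * log s) / (p - 1)) =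
      ((p - 1) * log A + log s - (p - 1) * critConst p) / (p - 1) := by
    unfold critConst
    field_simp
    ring
  have := div_pos (sub_pos.2 hlog) hp1
  rw [log_div (by positivity) two_ne_zero, log_mul hA.ne' hs.ne']
  linarith

theorem ContDiffOn.hasDerivOnIcc_Hd {H : ℝ → ℝ} {b c : ℝ} (hb : 0 ≤ b) (hbc : b < c)
    (hH : ContDiffOn ℝ 2 H (Icc 0 c)) :
    HasDerivOnIcc H (Hd H) 0 b ∧ HasDerivOnIcc (Hd H) (Hdd H) 0 b := by
  have hc : 0 < c := hb.trans_lt hbc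
  have hU : UniqueDiffOn ℝ (Icc 0 c) := uniqueDiffOn_Icc hc
  have hHd : ∀ t < c, Hd H t = derivWithin H (Icc 0 c) t := fun t ht =>
    derivWithin_congr_set (by
      rw [← Ici_inter_Iic]
      exact inter_eventuallyEq_left.2 ((eventually_le_nhds ht).mono fun _ h _ => h)) |>.symm
  have hHd_ev : ∀ t < c, Hd H =ᶠ[𝓝 t] derivWithin H (Icc 0 c) :=
    fun t ht => (eventually_lt_nhds ht).mono fun u hu => hHd u hu
  have hnhds : ∀ t ∈ Ioo 0 b, Icc 0 c ∈ 𝓝 t := fun t ht =>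
    Icc_mem_nhds ht.1 (ht.2.trans hbc)
  have hHd_at : ∀ t ∈ Ioo 0 b, Hd H t = deriv H t := fun t ht =>
    derivWithin_of_mem_nhds (Ici_mem_nhds ht.1)
  have hHdd_at : ∀ t ∈ Ioo 0 b, Hdd H t = deriv (Hd H) t := fun t ht =>
    derivWithin_of_mem_nhds (Ici_mem_nhds ht.1)
  refine ⟨⟨hH.continuousOn.mono (Icc_subset_Icc_right hbc.le), fun t ht => ?_⟩,
    ⟨(hH.continuousOn_derivWithin hU (by norm_num) |>.mono (Icc_subset_Icc_right hbc.le)).congr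
      fun t ht => hHd t (ht.2.trans_lt hbc), fun t ht => ?_⟩⟩
  · rw [hHd_at t ht]
    exact ((hH.contDiffAt (hnhds t ht)).differentiableAt (by norm_num)).hasDerivAt
  · rw [hHdd_at t ht]
    refine DifferentiableAt.hasDerivAt ?_
    refine ((hHd_ev t (ht.2.trans hbc)).differentiableAt_iff).2 ?_
    exact ((hH.derivWithin hU (m := 1) (by norm_num)).contDiffAt (hnhds t ht)).differentiableAt
      (by norm_num)

/-- The conditions of `MemAcrit` on `[0, b]`, with `H'` and `H''` derivatives in the usual sense
on `(0, b)`. -/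
structure CritProfile (p T₀ A : ℝ) (H H' H'' : ℝ → ℝ) (b : ℝ) : Prop where
  hasDerivOnIcc : HasDerivOnIcc H H' 0 b
  hasDerivOnIcc_deriv : HasDerivOnIcc H' H'' 0 b
  zero : H 0 = 0
  deriv_zero : H' 0 = 0
  mul_inv_le : ∀ t ∈ Ioo 0 b, A * (t + 1)⁻¹ ≤ H'' t
  forcing_le : ∀ t ∈ Ioo 0 b, T₀ ≤ t →
    (t + 1) ^ (-(p + 1)) * log (t + 1) ^ (-(p - 1)) * H t ^ p ≤ H'' t

theorem MemAcrit.critProfile {p T₀ A b : ℝ} {H : ℝ → ℝ} {S : EReal}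
    (h : MemAcrit p T₀ A H S) (hb : 0 ≤ b) (hbS : (b : EReal) < S) : CritProfile p T₀ A H (Hd H) (Hdd H) b := by
  obtain ⟨-, hC, h0, h0', hA, hF⟩ := h
  obtain ⟨c, hbc, hcS⟩ := EReal.lt_iff_exists_real_btwn.1 hbS
  have hlt : ∀ t ∈ Ioo 0 b, (t : EReal) < S := fun t ht =>
    (EReal.coe_lt_coe_iff.2 ht.2).trans hbS
  obtain ⟨hH, hH'⟩ := ContDiffOn.hasDerivOnIcc_Hd hb (EReal.coe_lt_coe_iff.1 hbc)
    (hC.mono fun t ht => ⟨ht.1, (EReal.coe_le_coe_iff.2 ht.2).trans_lt hcS⟩)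
  exact ⟨hH, hH', h0, h0', fun t ht => hA t ht.1.le (hlt t ht),
    fun t ht hT => hF t hT (hlt t ht)⟩

namespace CritProfile

variable {p T₀ A b : ℝ} {H H' H'' : ℝ → ℝ}

theorem monotoneOn_deriv (h : CritProfile p T₀ A H H' H'' b) (hA : 0 ≤ A) :
    MonotoneOn H' (Icc 0 b) :=
  h.hasDerivOnIcc_deriv.monotoneOn fun t ht =>
    (mul_nonneg hA (inv_nonneg.2 (by linarith [ht.1]))).trans (h.mul_inv_le t ht)

theorem add_mul_le (h : CritProfile p T₀ A H H' H'' b) (hA : 0 ≤ A) {u v : ℝ}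
    (hu : u ∈ Icc 0 b) (hv : v ∈ Icc 0 b) : H u + (v - u) * H' u ≤ H v :=
  h.hasDerivOnIcc.add_mul_le (h.monotoneOn_deriv hA) hu hv

theorem deriv_nonneg (h : CritProfile p T₀ A H H' H'' b) (hA : 0 ≤ A) {t : ℝ}
    (ht : t ∈ Icc 0 b) : 0 ≤ H' t :=
  h.deriv_zero ▸ h.monotoneOn_deriv hA ⟨le_rfl, ht.1.trans ht.2⟩ ht ht.1

theorem nonneg (h : CritProfile p T₀ A H H' H'' b) (hA : 0 ≤ A) {t : ℝ}
    (ht : t ∈ Icc 0 b) : 0 ≤ H t := by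
  simpa [h.zero, h.deriv_zero] using h.add_mul_le hA ⟨le_rfl, ht.1.trans ht.2⟩ ht

theorem monotoneOn_div (h : CritProfile p T₀ A H H' H'' b) (hA : 0 ≤ A) :
    MonotoneOn (fun t => H t / (t + 1)) (Icc 0 b) := by
  intro u hu v hv huv
  have hH'u := h.deriv_nonneg hA hu
  -- the tangent at `u` lies below `H`, both at `0` and at `v`
  have h0 := h.add_mul_le hA hu ⟨le_rfl, hu.1.trans hu.2⟩
  have hv' := h.add_mul_le hA hu hv
  have hu' : H u ≤ (u + 1) * H' u := by rw [h.zero] at h0; linarith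
  rw [div_le_div_iff₀ (by linarith [hu.1]) (by linarith [hu.1, hv.1])]
  calc H u * (v + 1) = H u * (u + 1) + (v - u) * H u := by ring
    _ ≤ H u * (u + 1) + (v - u) * ((u + 1) * H' u) := by gcongr
    _ = (H u + (v - u) * H' u) * (u + 1) := by ring
    _ ≤ H v * (u + 1) := by gcongr; linarith [hu.1]

theorem mul_log_le_deriv (h : CritProfile p T₀ A H H' H'' b) {t : ℝ} (ht : t ∈ Icc 0 b) :
    A * log (t + 1) ≤ H' t := by
  have := (HasDerivOnIcc.of_hasDerivAt fun u (hu : u ∈ Icc 0 t) =>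
    (hasDerivAt_log_add_one (by linarith [hu.1])).const_mul A).sub_le_sub
    (h.hasDerivOnIcc_deriv.mono le_rfl ht.2) ht.1
    fun u hu => h.mul_inv_le u ⟨hu.1, hu.2.trans_le ht.2⟩
  simpa [h.deriv_zero] using this

theorem mul_mul_log_sub_le (h : CritProfile p T₀ A H H' H'' b) {t : ℝ} (ht : t ∈ Icc 0 b) :
    A * ((t + 1) * log (t + 1) - t) ≤ H t := by
  have := (HasDerivOnIcc.of_hasDerivAt fun u (hu : u ∈ Icc 0 t) =>
    (hasDerivAt_mul_log_sub (by linarith [hu.1])).const_mul A).sub_le_sub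
    (h.hasDerivOnIcc.mono le_rfl ht.2) ht.1
    fun u hu => h.mul_log_le_deriv ⟨hu.1.le, hu.2.le.trans ht.2⟩
  simpa [h.zero] using this

theorem rpow_mul_log_sub_le_deriv_sub (h : CritProfile p T₀ A H H' H'' b) (hp : 1 ≤ p)
    {u v μ L : ℝ} (hT : T₀ ≤ u) (hu : 0 < u) (huv : u ≤ v) (hv : v ≤ b)
    (hL : log (v + 1) ≤ L) (hμ : 0 ≤ μ)
    (hlow : ∀ t ∈ Icc u v, μ * (t + 1) ≤ H t) :
    μ ^ p * L ^ (-(p - 1)) * (log (v + 1) - log (u + 1)) ≤ H' v - H' u := by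
  rw [mul_sub]
  refine (HasDerivOnIcc.of_hasDerivAt fun t (ht : t ∈ Icc u v) =>
    (hasDerivAt_log_add_one (by linarith [ht.1])).const_mul _).sub_le_sub
    (h.hasDerivOnIcc_deriv.mono hu.le hv) huv fun t ht => ?_
  have ht0 : 0 < t := hu.trans ht.1
  refine (mul_rpow_mul_inv_le hp ht0 ?_ hμ (hlow t (Ioo_subset_Icc_self ht))).trans
    (h.forcing_le t ⟨ht0, ht.2.trans_le hv⟩ (hT.trans ht.1.le))
  exact (log_le_log (by linarith) (by linarith [ht.2])).trans hL

theorem mul_div_two_le_div_exp (h : CritProfile p T₀ A H H' H'' b) (hA : 0 ≤ A) {s : ℝ}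
    (hs : 2 ≤ s) (hb : exp s - 1 ≤ b) : A * s / 2 ≤ H (exp s - 1) / exp s := by
  have := h.mul_mul_log_sub_le ⟨by linarith [add_one_le_exp s], hb⟩
  rw [sub_add_cancel, log_exp] at this
  rw [le_div_iff₀ (exp_pos s)]
  nlinarith [add_one_le_exp s, mul_nonneg hA (sub_nonneg.2 hs)]

theorem rpow_mul_le_div_exp (h : CritProfile p T₀ A H H' H'' b) (hA : 0 ≤ A) (hp : 1 ≤ p)
    {σ δ L : ℝ} (hσ : 0 < σ) (hT : T₀ ≤ exp σ - 1) (hδ : 0 < δ)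
    (hL : σ + 2 * δ ≤ L) (hb : exp L - 1 ≤ b) :
    (H (exp σ - 1) / exp σ) ^ p * (L ^ (-(p - 1)) * (δ ^ 2 / (1 + δ))) ≤
      H (exp (σ + 2 * δ) - 1) / exp (σ + 2 * δ) := by
  have hmem : ∀ s, 0 ≤ s → s ≤ L → exp s - 1 ∈ Icc 0 b := fun s hs hsL =>
    exp_sub_one_mem_Icc hs (by linarith [exp_le_exp.2 hsL])
  have hτ := hmem σ hσ.le (by linarith)
  have hτ' := hmem (σ + δ) (by linarith) (by linarith)
  have hτ'' := hmem (σ + 2 * δ) (by linarith) hL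
  set μ := H (exp σ - 1) / exp σ
  have hμ : 0 ≤ μ := div_nonneg (h.nonneg hA hτ) (exp_pos σ).le
  have hlow : ∀ t ∈ Icc (exp σ - 1) (exp (σ + δ) - 1), μ * (t + 1) ≤ H t := fun t ht => by
    have := h.monotoneOn_div hA hτ ⟨hτ.1.trans ht.1, ht.2.trans hτ'.2⟩ ht.1
    dsimp only at this
    rwa [sub_add_cancel, le_div_iff₀ (by linarith [hτ.1.trans ht.1])] at this
  have hgain : μ ^ p * L ^ (-(p - 1)) * δ ≤ H' (exp (σ + δ) - 1) := by
    have hστ : 0 < exp σ - 1 := by linarith [add_one_lt_exp hσ.ne']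
    have hττ' : exp σ - 1 ≤ exp (σ + δ) - 1 := by
      linarith [exp_le_exp.2 (by linarith : σ ≤ σ + δ)]
    have := h.rpow_mul_log_sub_le_deriv_sub hp hT hστ hττ' hτ'.2 (L := L)
      (by rw [sub_add_cancel, log_exp]; linarith) hμ hlow
    rw [sub_add_cancel, sub_add_cancel, log_exp, log_exp, add_sub_cancel_left] at this
    linarith [h.deriv_nonneg hA hτ]
  have hgap : exp (σ + 2 * δ) * (δ / (1 + δ)) ≤
      (exp (σ + 2 * δ) - 1) - (exp (σ + δ) - 1) := by
    have : exp (σ + δ) = exp (σ + 2 * δ) * exp (-δ) := by rw [← exp_add]; ring_nf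
    rw [this]
    nlinarith [div_one_add_le_one_sub_exp_neg hδ.le, exp_pos (σ + 2 * δ)]
  have htan := h.add_mul_le hA hτ' hτ''
  rw [le_div_iff₀ (exp_pos _)]
  calc μ ^ p * (L ^ (-(p - 1)) * (δ ^ 2 / (1 + δ))) * exp (σ + 2 * δ)
      = exp (σ + 2 * δ) * (δ / (1 + δ)) * (μ ^ p * L ^ (-(p - 1)) * δ) := by ring
    _ ≤ ((exp (σ + 2 * δ) - 1) - (exp (σ + δ) - 1)) * H' (exp (σ + δ) - 1) := by
      have : 0 ≤ L ^ (-(p - 1)) := rpow_nonneg (by linarith) _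
      gcongr
      · linarith [exp_le_exp.2 (show σ + δ ≤ σ + 2 * δ by linarith)]
    _ ≤ H (exp (σ + 2 * δ) - 1) := by linarith [h.nonneg hA hτ']

theorem div_exp_le_div_exp (h : CritProfile p T₀ A H H' H'' b) (hA : 0 ≤ A) {σ σ' : ℝ}
    (hσ : 0 ≤ σ) (hσσ' : σ ≤ σ') (hb : exp σ' - 1 ≤ b) :
    H (exp σ - 1) / exp σ ≤ H (exp σ' - 1) / exp σ' := by
  have hle : exp σ - 1 ≤ exp σ' - 1 := by linarith [exp_le_exp.2 hσσ']
  have := h.monotoneOn_div hA (exp_sub_one_mem_Icc hσ (hle.trans hb))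
    (exp_sub_one_mem_Icc (hσ.trans hσσ') hb) hle
  simpa only [sub_add_cancel] using this

theorem lt_exp_two_mul_sub_one (h : CritProfile p T₀ A H H' H'' b) (hp : 1 < p) (hA : 0 < A)
    {s : ℝ} (hs : 2 ≤ s) (hT : T₀ ≤ s)
    (hsA : exp ((p - 1) * critConst p) < A ^ (p - 1) * s) :
    b < exp (2 * s) - 1 := by
  by_contra! hb
  have hb' : ∀ x ≤ 2 * s, exp x - 1 ≤ b := fun x hx => by linarith [exp_le_exp.2 hx]
  set q : ℝ → ℝ := fun x => H (exp x - 1) / exp x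
  set σ : ℕ → ℝ := fun i => 2 * s - s / 2 ^ i with hσ
  have hσs : ∀ i, s ≤ σ i ∧ σ i < 2 * s := fun i => by
    have : s / 2 ^ i ≤ s := div_le_self (by linarith) (one_le_pow₀ (by norm_num))
    have : 0 < s / 2 ^ i := by positivity
    constructor <;> linarith
  have hσ_succ : ∀ i : ℕ, σ i + 2 * (s / 2 ^ (i + 2)) = σ (i + 1) := fun i => by
    simp only [hσ]; field_simp; ring
  have hσ0 : σ 0 = s := by simp only [hσ]; ring
  have hq0 : A * s / 2 ≤ q (σ 0) := by
    rw [hσ0]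
    exact h.mul_div_two_le_div_exp hA.le hs (hb' s (by linarith))
  have hq_pos : ∀ i, 0 < q (σ i) := fun i =>
    (by positivity : 0 < A * s / 2).trans_le <| hq0.trans <| h.div_exp_le_div_exp hA.le
      (by linarith) (by linarith [hσs i]) (hb' _ (hσs i).2.le)
  have hrec : ∀ i : ℕ, p * log (q (σ i)) - ((p + 3) * log 2 + (p - 2) * log s) -
      2 * log 2 * i ≤ log (q (σ (i + 1))) := fun i => by
    have hσpos : 0 < σ i := by linarith [hσs i]
    have hstep := h.rpow_mul_le_div_exp hA.le hp.le hσpos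
      (by linarith [hσs i, add_one_le_exp (σ i)]) (δ := s / 2 ^ (i + 2)) (by positivity)
      (hσ_succ i ▸ (hσs (i + 1)).2.le) (hb' _ le_rfl)
    rw [hσ_succ] at hstep
    have : 0 < (2 * s) ^ (-(p - 1)) * ((s / 2 ^ (i + 2)) ^ 2 / (1 + s / 2 ^ (i + 2))) := by
      have := rpow_pos_of_pos (by linarith : 0 < 2 * s) (-(p - 1))
      positivity
    have hlog := log_le_log (mul_pos (rpow_pos_of_pos (hq_pos i) p) this) hstep
    rw [log_mul (rpow_pos_of_pos (hq_pos i) p).ne' this.ne', log_rpow (hq_pos i)] at hlog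
    linarith [le_log_rpow_mul_sq_div (p := p) hs i]
  have htend := tendsto_atTop_of_mul_sub_le (x := fun i => log (q (σ i))) hp
    (by positivity) hrec <|
    (lt_log_of_exp_critConst_lt hp hA (by linarith) hsA).trans_le
      (log_le_log (by positivity) hq0)
  obtain ⟨i, hi⟩ := (htend.eventually_gt_atTop (log (q (2 * s)))).exists
  exact hi.not_ge <| log_le_log (hq_pos i) <|
    h.div_exp_le_div_exp hA.le (by linarith [hσs i]) (hσs i).2.le (hb' _ le_rfl)

end CritProfile

theorem MemAcrit.le_exp {p T₀ A s : ℝ} {H : ℝ → ℝ} {S : EReal} (h : MemAcrit p T₀ A H S)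
    (hp : 1 < p) (hA : 0 < A) (hs : 2 ≤ s) (hT : T₀ ≤ s)
    (hsA : exp ((p - 1) * critConst p) < A ^ (p - 1) * s) :
    S ≤ ((exp (2 * s) : ℝ) : EReal) := by
  by_contra! hS
  have hb : ((exp (2 * s) - 1 : ℝ) : EReal) < S :=
    (EReal.coe_lt_coe_iff.2 (sub_one_lt _)).trans hS
  exact ((h.critProfile (by linarith [add_one_le_exp (2 * s)]) hb).lt_exp_two_mul_sub_one
    hp hA hs hT hsA).false

theorem EReal.ne_top_and_log_toReal_le {S : EReal} {x : ℝ} (hS : 0 < S)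
    (h : S ≤ ((Real.exp x : ℝ) : EReal)) : S ≠ ⊤ ∧ log S.toReal ≤ x := by
  induction S with
  | bot => exact absurd hS (by simp)
  | top => exact absurd h (by simp)
  | coe s =>
    rw [EReal.coe_pos] at hS
    rw [EReal.coe_le_coe_iff] at h
    exact ⟨EReal.coe_ne_top s, (log_le_iff_le_exp hS).2 h⟩

theorem crit_ode_lemma_general (p T₀ : ℝ) (hp : 1 < p) :
    (∀ A : ℝ, 0 < A → ∃ M : ℝ, ∀ (H : ℝ → ℝ) (S : EReal),
      MemAcrit p T₀ A H S → S ≤ (M : EReal)) ∧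
    (∃ A₀ > (0 : ℝ), ∃ C > (0 : ℝ), ∀ A : ℝ, 0 < A → A < A₀ →
      ∀ (H : ℝ → ℝ) (S : EReal), MemAcrit p T₀ A H S →
        S ≠ ⊤ ∧ Real.log S.toReal ≤ C * A ^ (-(p - 1))) := by
  set K := 2 * exp ((p - 1) * critConst p)
  have hK : 0 < K := by positivity
  have key : ∀ A > 0, ∀ s, max 2 T₀ ≤ s → K * A ^ (-(p - 1)) ≤ s → ∀ H S,
      MemAcrit p T₀ A H S → S ≤ ((exp (2 * s) : ℝ) : EReal) := by
    intro A hA s hs hKs H S h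
    refine h.le_exp hp hA (le_of_max_le_left hs) (le_of_max_le_right hs) ?_
    calc exp ((p - 1) * critConst p) < K := by linarith [exp_pos ((p - 1) * critConst p)]
      _ = A ^ (p - 1) * (K * A ^ (-(p - 1))) := by
        rw [rpow_neg hA.le]; field_simp [(rpow_pos_of_pos hA (p - 1)).ne']
      _ ≤ A ^ (p - 1) * s := by gcongr
  refine ⟨fun A hA => ⟨_, key A hA _ (le_max_left _ _) (le_max_right _ _)⟩, ?_⟩
  obtain ⟨A₀, hA₀, hsmall⟩ := (nhdsGT_basis (0 : ℝ)).eventually_iff.1 <|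
    ((tendsto_rpow_neg_nhdsGT_zero (by linarith : -(p - 1) < 0)).const_mul_atTop hK
      ).eventually_ge_atTop (max 2 T₀)
  refine ⟨A₀, hA₀, 2 * K, by positivity, fun A hA hAA₀ H S h => ?_⟩
  rw [mul_assoc]
  exact EReal.ne_top_and_log_toReal_le h.1 (key A hA _ (hsmall ⟨hA, hAA₀⟩) le_rfl H S h)

/-- Critical ODE lemma: `T_crit(A) = sup {𝒯_H : H ∈ 𝒜_crit(A)}` is finite for every `A > 0`,
and moreover `limsup_{A → 0⁺} log (T_crit(A)) · A^{p-1} < ∞`, i.e. there are `A₀ > 0`, `C > 0`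
such that for every `A ∈ (0, A₀)` and every `H ∈ 𝒜_crit(A)` on `[0, 𝒯_H)` one has
`log 𝒯_H ≤ C A^{-(p-1)}`. -/
theorem crit_ode_lemma (p T₀ : ℝ) (hp : 1 < p) (hT₀ : 0 < T₀) :
    (∀ A : ℝ, 0 < A → ∃ M : ℝ, ∀ (H : ℝ → ℝ) (S : EReal),
      MemAcrit p T₀ A H S → S ≤ (M : EReal)) ∧
    (∃ A₀ > (0 : ℝ), ∃ C > (0 : ℝ), ∀ A : ℝ, 0 < A → A < A₀ →
      ∀ (H : ℝ → ℝ) (S : EReal), MemAcrit p T₀ A H S →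
        S ≠ ⊤ ∧ Real.log S.toReal ≤ C * A ^ (-(p - 1))) :=
  crit_ode_lemma_general p T₀ hp
end

section
/- Let 0 < T < S ≤ ∞. Let μ : [T, S) → (0, ∞) be continuously differentiable and nonincreasing with T² μ(T) ≥ 1. Let H be twice continuously differentiable on [0, S) with H(0) = H'(0) = 0, H''(t) ≥ 0 on [0, S), H(t) > 0 and H'(t) > 0 for all t ∈ (0, S), and H''(t) ≥ μ(t) H(t) for all t ∈ [T, S). Then for all t ∈ [T, S): H'(t)² ≥ μ(t) H(t)² / (T² μ(T)); in particular H'(t) ≥ √(μ(t)/(T²μ(T))) · H(t). -/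
/-!
Since `H'' ≥ 0`, `H'` is nondecreasing, so the mean value theorem on `[0, T]` gives
`H(T) ≤ T H'(T)`, i.e. `G(T) ≥ 0` for the energy `G = H'² - μ H² / (T² μ(T))`. Along `[T, S)`,
`G' = 2 H' H'' - (μ' H² + 2 μ H H') / (T² μ(T))`, which is nonnegative because `μ' ≤ 0`, `H, H' ≥ 0`,
`H'' ≥ μ H` and `T² μ(T) ≥ 1`. Hence `G ≥ 0` on `[T, S)`.
-/

open Set

open Filter Topology

lemma monotoneOn_of_hasDerivAt_nonneg {s : Set ℝ} (hs : Convex ℝ s) {f f' : ℝ → ℝ}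
    (hf : ∀ x ∈ s, HasDerivAt f (f' x) x) (hf' : ∀ x ∈ s, 0 ≤ f' x) : MonotoneOn f s :=
  monotoneOn_of_hasDerivWithinAt_nonneg hs (fun x hx => (hf x hx).continuousAt.continuousWithinAt)
    (fun x hx => (hf x (interior_subset hx)).hasDerivWithinAt)
    (fun x hx => hf' x (interior_subset hx))

lemma image_sub_le_mul_sub_of_monotoneOn_deriv {f f' : ℝ → ℝ} {a b : ℝ} (hab : a ≤ b)
    (hf : ContinuousOn f (Icc a b)) (hderiv : ∀ x ∈ Ioo a b, HasDerivAt f (f' x) x)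
    (hmono : MonotoneOn f' (Ioc a b)) : f b - f a ≤ f' b * (b - a) := by
  refine (convex_Icc a b).image_sub_le_mul_sub_of_deriv_le hf ?_ ?_ a (left_mem_Icc.2 hab) b
    (right_mem_Icc.2 hab) hab <;> rw [interior_Icc]
  · exact fun x hx => (hderiv x hx).differentiableAt.differentiableWithinAt
  · intro x hx
    rw [(hderiv x hx).deriv]
    exact hmono ⟨hx.1, hx.2.le⟩ ⟨hx.1.trans hx.2, le_rfl⟩ hx.2.le

lemma monotoneOn_energy {a b C : ℝ} {h h' h'' μ μ' : ℝ → ℝ} (hC : 1 ≤ C)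
    (hh : ∀ y ∈ Icc a b, HasDerivAt h (h' y) y) (hh' : ∀ y ∈ Icc a b, HasDerivAt h' (h'' y) y)
    (hμcont : ContinuousOn μ (Icc a b)) (hμ : ∀ y ∈ Ioo a b, HasDerivAt μ (μ' y) y)
    (hμanti : AntitoneOn μ (Icc a b)) (hμpos : ∀ y ∈ Ioo a b, 0 ≤ μ y)
    (hpos : ∀ y ∈ Ioo a b, 0 ≤ h y ∧ 0 ≤ h' y) (hode : ∀ y ∈ Ioo a b, μ y * h y ≤ h'' y) :
    MonotoneOn (fun y => h' y ^ 2 - μ y * h y ^ 2 / C) (Icc a b) := by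
  have hcont : ∀ {g g' : ℝ → ℝ}, (∀ y ∈ Icc a b, HasDerivAt g (g' y) y) →
      ContinuousOn g (Icc a b) := fun hg y hy => (hg y hy).continuousAt.continuousWithinAt
  refine monotoneOn_of_hasDerivWithinAt_nonneg (convex_Icc a b)
    (((hcont hh').pow 2).sub ((hμcont.mul ((hcont hh).pow 2)).div_const C))
    (f' := fun y => 2 * h' y * h'' y - (μ' y * h y ^ 2 + μ y * (2 * h y * h' y)) / C) ?_ ?_ <;>
    rw [interior_Icc] <;> intro y hy
  · have hG := ((hh' y (Ioo_subset_Icc_self hy)).fun_pow 2).fun_sub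
      (((hμ y hy).fun_mul ((hh y (Ioo_subset_Icc_self hy)).fun_pow 2)).div_const C)
    refine (hG.congr_deriv ?_).hasDerivWithinAt
    norm_num
  · obtain ⟨hhy, hh'y⟩ := hpos y hy
    have hμ' : μ' y ≤ 0 := by
      rw [← (hμ y hy).deriv, ← derivWithin_of_mem_nhds (Icc_mem_nhds hy.1 hy.2)]
      exact hμanti.derivWithin_nonpos
    have hdecay : μ' y * h y ^ 2 ≤ 0 := mul_nonpos_of_nonpos_of_nonneg hμ' (sq_nonneg _)
    have hgrowth : μ y * h y * h' y ≤ C * (h'' y * h' y) :=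
      calc μ y * h y * h' y ≤ C * (μ y * h y * h' y) :=
            le_mul_of_one_le_left (by have := hμpos y hy; positivity) hC
        _ ≤ C * (h'' y * h' y) := by gcongr; exact hode y hy
    rw [sub_nonneg, div_le_iff₀ (by linarith)]
    linarith

lemma sqrt_mul_le_of_mul_sq_le {a b c : ℝ} (hb : 0 ≤ b) (hc : 0 ≤ c) (h : a * b ^ 2 ≤ c ^ 2) :
    √a * b ≤ c :=
  calc √a * b = √(a * b ^ 2) := by rw [Real.sqrt_mul' a (sq_nonneg b), Real.sqrt_sq hb]
    _ ≤ √(c ^ 2) := Real.sqrt_le_sqrt h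
    _ = c := Real.sqrt_sq hc

section OneSidedDerivatives

variable {H : ℝ → ℝ} {x : ℝ}

lemma Hd_eventuallyEq_deriv (hx : 0 < x) : Hd H =ᶠ[𝓝 x] deriv H :=
  (eventually_gt_nhds hx).mono fun _ hy => derivWithin_of_mem_nhds (Ici_mem_nhds hy)

lemma hasDerivAt_Hd (hx : 0 < x) (hH : DifferentiableAt ℝ H x) : HasDerivAt H (Hd H x) x := by
  rw [(Hd_eventuallyEq_deriv hx).eq_of_nhds]
  exact hH.hasDerivAt

lemma hasDerivAt_Hdd (hx : 0 < x) (hH : DifferentiableAt ℝ (deriv H) x) :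
    HasDerivAt (Hd H) (Hdd H x) x := by
  rw [Hdd, derivWithin_of_mem_nhds (Ici_mem_nhds hx), (Hd_eventuallyEq_deriv hx).deriv_eq]
  exact hH.hasDerivAt.congr_of_eventuallyEq (Hd_eventuallyEq_deriv hx)

lemma hasDerivAt_Hd_and_Hdd {S : EReal}
    (hH : ContDiffOn ℝ 2 H {t : ℝ | 0 ≤ t ∧ (t : EReal) < S}) (hx : 0 < x) (hxS : (x : EReal) < S) :
    HasDerivAt H (Hd H x) x ∧ HasDerivAt (Hd H) (Hdd H x) x := by
  set s := {t : ℝ | 0 < t ∧ (t : EReal) < S}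
  have hs : IsOpen s := isOpen_Ioi.inter (isOpen_Iio.preimage continuous_coe_real_ereal)
  have hHs : ContDiffOn ℝ 2 H s := hH.mono fun t ht => ⟨ht.1.le, ht.2⟩
  have hH's : ContDiffOn ℝ 1 (deriv H) s := hHs.deriv_of_isOpen hs (by norm_num)
  exact ⟨hasDerivAt_Hd hx ((hHs.differentiableOn (by norm_num) x ⟨hx, hxS⟩).differentiableAt
      (hs.mem_nhds ⟨hx, hxS⟩)),
    hasDerivAt_Hdd hx ((hH's.differentiableOn one_ne_zero x ⟨hx, hxS⟩).differentiableAt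
      (hs.mem_nhds ⟨hx, hxS⟩))⟩

lemma le_mul_Hd {S : EReal} (hH : ContDiffOn ℝ 2 H {t : ℝ | 0 ≤ t ∧ (t : EReal) < S})
    (h0 : H 0 = 0) (hconv : ∀ t : ℝ, 0 ≤ t → (t : EReal) < S → 0 ≤ Hdd H t) (hx : 0 < x)
    (hxS : (x : EReal) < S) : H x ≤ x * Hd H x := by
  have hlt : ∀ t ≤ x, (t : EReal) < S := fun t ht => (EReal.coe_le_coe_iff.2 ht).trans_lt hxS
  have hderiv : ∀ t ∈ Ioc 0 x, HasDerivAt H (Hd H t) t ∧ HasDerivAt (Hd H) (Hdd H t) t :=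
    fun t ht => hasDerivAt_Hd_and_Hdd hH ht.1 (hlt t ht.2)
  have hmono : MonotoneOn (Hd H) (Ioc 0 x) :=
    monotoneOn_of_hasDerivAt_nonneg (convex_Ioc 0 x) (fun t ht => (hderiv t ht).2)
      fun t ht => hconv t ht.1.le (hlt t ht.2)
  have := image_sub_le_mul_sub_of_monotoneOn_deriv hx.le
    (hH.continuousOn.mono fun t ht => ⟨ht.1, hlt t ht.2⟩)
    (fun t ht => (hderiv t (Ioo_subset_Ioc_self ht)).1) hmono
  linarith

end OneSidedDerivatives

theorem mu_comparison_lemma_general (T : ℝ) (S : EReal) (hT : 0 < T)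
    (μ H : ℝ → ℝ)
    (hμsm : ContDiffOn ℝ 1 μ {t : ℝ | T ≤ t ∧ (t : EReal) < S})
    (hμpos : ∀ t : ℝ, T ≤ t → (t : EReal) < S → 0 < μ t)
    (hμmono : AntitoneOn μ {t : ℝ | T ≤ t ∧ (t : EReal) < S})
    (hμT : 1 ≤ T ^ 2 * μ T)
    (hsm : ContDiffOn ℝ 2 H {t : ℝ | 0 ≤ t ∧ (t : EReal) < S})
    (h0 : H 0 = 0)
    (hconv : ∀ t : ℝ, 0 ≤ t → (t : EReal) < S → 0 ≤ Hdd H t)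
    (hHpos : ∀ t : ℝ, 0 < t → (t : EReal) < S → 0 < H t ∧ 0 < Hd H t)
    (hineq : ∀ t : ℝ, T ≤ t → (t : EReal) < S → μ t * H t ≤ Hdd H t) :
    ∀ t : ℝ, T ≤ t → (t : EReal) < S →
      μ t * H t ^ 2 / (T ^ 2 * μ T) ≤ (Hd H t) ^ 2 ∧
      Real.sqrt (μ t / (T ^ 2 * μ T)) * H t ≤ Hd H t := by
  intro t hTt htS
  have hTS : (T : EReal) < S := (EReal.coe_le_coe_iff.2 hTt).trans_lt htS
  have hsub : Icc T t ⊆ {y : ℝ | T ≤ y ∧ (y : EReal) < S} :=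
    fun y hy => ⟨hy.1, (EReal.coe_le_coe_iff.2 hy.2).trans_lt htS⟩
  have hIoo : ∀ y ∈ Ioo T t, T ≤ y ∧ (y : EReal) < S := fun y hy => hsub (Ioo_subset_Icc_self hy)
  have hderiv (y) (hy : y ∈ Icc T t) := hasDerivAt_Hd_and_Hdd hsm (hT.trans_le hy.1) (hsub hy).2
  have hμderiv (y) (hy : y ∈ Ioo T t) : HasDerivAt μ (deriv μ y) y :=
    ((hμsm.differentiableOn one_ne_zero y (hIoo y hy)).differentiableAt
      (mem_of_superset (Icc_mem_nhds hy.1 hy.2) hsub)).hasDerivAt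
  have hmono := monotoneOn_energy hμT (fun y hy => (hderiv y hy).1) (fun y hy => (hderiv y hy).2)
    (hμsm.continuousOn.mono hsub) hμderiv (hμmono.mono hsub)
    (fun y hy => (hμpos y (hIoo y hy).1 (hIoo y hy).2).le)
    (fun y hy => (hHpos y (hT.trans hy.1) (hIoo y hy).2).imp le_of_lt le_of_lt)
    (fun y hy => hineq y (hIoo y hy).1 (hIoo y hy).2)
  have hstart : μ T * H T ^ 2 / (T ^ 2 * μ T) ≤ Hd H T ^ 2 := by
    have hμT0 := hμpos T le_rfl hTS
    calc μ T * H T ^ 2 / (T ^ 2 * μ T) = (H T / T) ^ 2 := by field_simp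
      _ ≤ Hd H T ^ 2 := pow_le_pow_left₀ (div_nonneg (hHpos T hT hTS).1.le hT.le)
          ((div_le_iff₀' hT).2 (le_mul_Hd hsm h0 hconv hT hTS)) 2
  have hfirst : μ t * H t ^ 2 / (T ^ 2 * μ T) ≤ Hd H t ^ 2 := by
    linarith [hmono (left_mem_Icc.2 hTt) (right_mem_Icc.2 hTt) hTt]
  obtain ⟨hHt, hHdt⟩ := hHpos t (hT.trans_le hTt) htS
  exact ⟨hfirst, sqrt_mul_le_of_mul_sq_le hHt.le hHdt.le (by rwa [div_mul_eq_mul_div])⟩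

/-- Let `0 < T < S ≤ ∞`, let `μ` be `C¹`, positive and nonincreasing on `[T, S)` with
`T² μ(T) ≥ 1`, and let `H` be `C²` on `[0, S)` with `H(0) = H'(0) = 0`, `H'' ≥ 0` on `[0, S)`,
`H > 0`, `H' > 0` on `(0, S)`, and `H''(t) ≥ μ(t) H(t)` on `[T, S)`. Then for all
`t ∈ [T, S)`: `H'(t)² ≥ μ(t) H(t)² / (T² μ(T))` and `H'(t) ≥ √(μ(t)/(T² μ(T))) H(t)`. -/
theorem mu_comparison_lemma (T : ℝ) (S : EReal) (hT : 0 < T) (hTS : (T : EReal) < S)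
    (μ H : ℝ → ℝ)
    (hμsm : ContDiffOn ℝ 1 μ {t : ℝ | T ≤ t ∧ (t : EReal) < S})
    (hμpos : ∀ t : ℝ, T ≤ t → (t : EReal) < S → 0 < μ t)
    (hμmono : AntitoneOn μ {t : ℝ | T ≤ t ∧ (t : EReal) < S})
    (hμT : 1 ≤ T ^ 2 * μ T)
    (hsm : ContDiffOn ℝ 2 H {t : ℝ | 0 ≤ t ∧ (t : EReal) < S})
    (h0 : H 0 = 0) (h0' : Hd H 0 = 0)
    (hconv : ∀ t : ℝ, 0 ≤ t → (t : EReal) < S → 0 ≤ Hdd H t)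
    (hHpos : ∀ t : ℝ, 0 < t → (t : EReal) < S → 0 < H t ∧ 0 < Hd H t)
    (hineq : ∀ t : ℝ, T ≤ t → (t : EReal) < S → μ t * H t ≤ Hdd H t) :
    ∀ t : ℝ, T ≤ t → (t : EReal) < S →
      μ t * H t ^ 2 / (T ^ 2 * μ T) ≤ (Hd H t) ^ 2 ∧
      Real.sqrt (μ t / (T ^ 2 * μ T)) * H t ≤ Hd H t :=
  mu_comparison_lemma_general T S hT μ H hμsm hμpos hμmono hμT hsm h0 hconv hHpos hineq
end

section
/- Let p > 1, K > 0, T̄ > 0 and S ∈ (T̄, ∞]. Suppose H is twice continuously differentiable on [T̄, S) with H(T̄) > 0, H'(t) > 0 on [T̄, S), T̄ · H'(T̄) ≥ H(T̄), and H''(t) ≥ K · H(t)^{(p+1)/2} for all t ∈ [T̄, S). Then S ≤ 2T̄ + (4/(p−1)) · ((4K(1 − 2^{−(p+3)/2}))/(p+3))^{−1/2} · (2 H(T̄))^{−(p−1)/4}; in particular S is finite. -/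
/-!
Since `H'' > 0`, `H` lies above its tangent at `T̄`, and `T̄ H'(T̄) ≥ H(T̄)` turns this into
`H(t) ≥ (t / T̄) H(T̄)`; in particular `H ≥ 2 H(T̄)` on `[2T̄, S)`. With `q = (p + 3) / 2`,
multiplying `H'' ≥ K H^{q-1}` by `H' > 0` shows that the energy `H'² - (2K/q) H^q` is
nondecreasing, so `H'² ≥ (2K/q) (H^q - H(T̄)^q) ≥ C² H^q` on `[2T̄, S)` with
`C² = (2K/q)(1 - 2^{-q})`. Comparing with the explicit blow-up solution of `y' = C y^{q/2}`,
`H^{1 - q/2} + (q/2 - 1) C t` is nonincreasing there; as `H^{1 - q/2} > 0`, the interval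
`[2T̄, S)` has length at most `(2 H(T̄))^{1 - q/2} / ((q/2 - 1) C)`.
-/

open Set

section OneSided

variable {f : ℝ → ℝ} {a : ℝ} {V : Set ℝ} {n : WithTop ℕ∞}

theorem ContDiffOn.derivWithin_Ici_inter {m : WithTop ℕ∞} (hV : IsOpen V)
    (hf : ContDiffOn ℝ n f (Ici a ∩ V)) (hmn : m + 1 ≤ n) :
    ContDiffOn ℝ m (derivWithin f (Ici a)) (Ici a ∩ V) :=
  (hf.derivWithin ((uniqueDiffOn_Ici a).inter hV) hmn).congr fun _ ht =>
    (derivWithin_inter (hV.mem_nhds ht.2)).symm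

theorem ContDiffOn.hasDerivAt_derivWithin_Ici (hV : IsOpen V) (hn : n ≠ 0)
    (hf : ContDiffOn ℝ n f (Ici a ∩ V)) {t : ℝ} (ht : t ∈ Ioi a ∩ V) :
    HasDerivAt f (derivWithin f (Ici a) t) t := by
  rw [derivWithin_of_mem_nhds (Ici_mem_nhds ht.1)]
  exact ((hf.differentiableOn hn).differentiableAt
    (Filter.inter_mem (Ici_mem_nhds ht.1) (hV.mem_nhds ht.2))).hasDerivAt

theorem ContDiffOn.hasDerivAt_derivWithin_Ici_of_Icc_subset {b : ℝ} (hV : IsOpen V)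
    (hf : ContDiffOn ℝ 2 f (Ici a ∩ V)) (hab : Icc a b ⊆ V) :
    ContinuousOn f (Icc a b) ∧ ContinuousOn (derivWithin f (Ici a)) (Icc a b) ∧
      (∀ t ∈ Ioo a b, HasDerivAt f (derivWithin f (Ici a) t) t) ∧
      ∀ t ∈ Ioo a b, HasDerivAt (derivWithin f (Ici a))
        (derivWithin (derivWithin f (Ici a)) (Ici a) t) t := by
  have hsub : Icc a b ⊆ Ici a ∩ V := fun t ht => ⟨ht.1, hab ht⟩
  have hIoo : ∀ t ∈ Ioo a b, t ∈ Ioi a ∩ V := fun t ht => ⟨ht.1, hab (Ioo_subset_Icc_self ht)⟩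
  have hf' : ContDiffOn ℝ 1 (derivWithin f (Ici a)) (Ici a ∩ V) :=
    hf.derivWithin_Ici_inter hV (by norm_num)
  exact ⟨hf.continuousOn.mono hsub, hf'.continuousOn.mono hsub,
    fun t ht => hf.hasDerivAt_derivWithin_Ici hV two_ne_zero (hIoo t ht),
    fun t ht => hf'.hasDerivAt_derivWithin_Ici hV one_ne_zero (hIoo t ht)⟩

end OneSided

theorem sqrt_mul_rpow_half_le {c q x y u v : ℝ} (hc : 0 ≤ c) (hq : 0 ≤ q) (hx : 0 ≤ x)
    (hxy : 2 * x ≤ y) (hv : 0 ≤ v) (h : u ^ 2 - c * x ^ q ≤ v ^ 2 - c * y ^ q) :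
    √(c * (1 - 2 ^ (-q))) * y ^ (q / 2) ≤ v := by
  have hy : 0 ≤ y := by linarith
  have hxq : x ^ q ≤ 2 ^ (-q) * y ^ q := by
    calc x ^ q ≤ (y / 2) ^ q := Real.rpow_le_rpow hx (by linarith) hq
      _ = 2 ^ (-q) * y ^ q := by
        rw [Real.div_rpow hy zero_le_two, Real.rpow_neg zero_le_two, div_eq_inv_mul]
  have hsq : c * (1 - 2 ^ (-q)) * y ^ q ≤ v ^ 2 := by
    nlinarith [sq_nonneg u, mul_le_mul_of_nonneg_left hxq hc]
  calc √(c * (1 - 2 ^ (-q))) * y ^ (q / 2) = √(c * (1 - 2 ^ (-q)) * y ^ q) := by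
        rw [Real.sqrt_mul' _ (Real.rpow_nonneg hy q), Real.sqrt_eq_rpow (y ^ q), ← Real.rpow_mul hy,
          mul_one_div]
    _ ≤ √(v ^ 2) := Real.sqrt_le_sqrt hsq
    _ = v := Real.sqrt_sq hv

section Interval

variable {f f' f'' : ℝ → ℝ} {a b : ℝ}

theorem monotoneOn_Icc_of_hasDerivAt_nonneg (hf : ContinuousOn f (Icc a b))
    (hf' : ∀ t ∈ Ioo a b, HasDerivAt f (f' t) t) (hf'₀ : ∀ t ∈ Ioo a b, 0 ≤ f' t) :
    MonotoneOn f (Icc a b) :=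
  monotoneOn_of_hasDerivWithinAt_nonneg (convex_Icc a b) hf
    (by simpa only [interior_Icc] using fun t ht => (hf' t ht).hasDerivWithinAt)
    (by simpa only [interior_Icc] using hf'₀)

theorem antitoneOn_Icc_of_hasDerivAt_nonpos (hf : ContinuousOn f (Icc a b))
    (hf' : ∀ t ∈ Ioo a b, HasDerivAt f (f' t) t) (hf'₀ : ∀ t ∈ Ioo a b, f' t ≤ 0) :
    AntitoneOn f (Icc a b) :=
  antitoneOn_of_hasDerivWithinAt_nonpos (convex_Icc a b) hf
    (by simpa only [interior_Icc] using fun t ht => (hf' t ht).hasDerivWithinAt)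
    (by simpa only [interior_Icc] using hf'₀)

theorem mul_sub_le_sub_of_monotoneOn_deriv (hf : ContinuousOn f (Icc a b))
    (hf' : ∀ t ∈ Ioo a b, HasDerivAt f (f' t) t) (hmono : MonotoneOn f' (Icc a b))
    {t : ℝ} (ht : t ∈ Icc a b) : f' a * (t - a) ≤ f t - f a := by
  have ha : a ∈ Icc a b := left_mem_Icc.2 (ht.1.trans ht.2)
  have hg : MonotoneOn (fun s => f s - f' a * s) (Icc a b) :=
    monotoneOn_Icc_of_hasDerivAt_nonneg (hf.sub (continuousOn_const.mul continuousOn_id))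
      (fun s hs => (hf' s hs).sub ((hasDerivAt_id s).const_mul (f' a)))
      fun s hs => by
        simpa only [mul_one, sub_nonneg] using hmono ha (Ioo_subset_Icc_self hs) hs.1.le
  have := hg ha ht ht.1
  simp only at this
  linarith

theorem monotoneOn_sq_sub_rpow_of_mul_rpow_le (hf : ContinuousOn f (Icc a b))
    (hf'c : ContinuousOn f' (Icc a b)) (hf' : ∀ t ∈ Ioo a b, HasDerivAt f (f' t) t)
    (hf'' : ∀ t ∈ Ioo a b, HasDerivAt f' (f'' t) t) {K q : ℝ} (hq : q ≠ 0)
    (hpos : ∀ t ∈ Icc a b, 0 < f t) (hf'₀ : ∀ t ∈ Ioo a b, 0 ≤ f' t)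
    (hK : ∀ t ∈ Ioo a b, K * f t ^ (q - 1) ≤ f'' t) :
    MonotoneOn (fun t => f' t ^ 2 - 2 * K / q * f t ^ q) (Icc a b) := by
  refine monotoneOn_Icc_of_hasDerivAt_nonneg
    ((hf'c.pow 2).sub (continuousOn_const.mul (hf.rpow_const fun t ht => Or.inl (hpos t ht).ne')))
    (fun t ht => ((hf'' t ht).pow 2).sub
      (((hf' t ht).rpow_const (Or.inl (hpos t (Ioo_subset_Icc_self ht)).ne')).const_mul _))
    fun t ht => ?_
  have h : (2 : ℕ) * f' t ^ (2 - 1) * f'' t - 2 * K / q * (f' t * q * f t ^ (q - 1)) =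
      2 * f' t * (f'' t - K * f t ^ (q - 1)) := by
    field_simp
    ring
  rw [h]
  exact mul_nonneg (mul_nonneg zero_le_two (hf'₀ t ht)) (sub_nonneg.2 (hK t ht))

theorem sub_lt_of_mul_rpow_le_deriv (hf : ContinuousOn f (Icc a b))
    (hf' : ∀ t ∈ Ioo a b, HasDerivAt f (f' t) t) (hpos : ∀ t ∈ Icc a b, 0 < f t)
    {C β : ℝ} (hC : 0 < C) (hβ : 1 < β) (hab : a ≤ b)
    (hlow : ∀ t ∈ Ioo a b, C * f t ^ β ≤ f' t) :
    b - a < ((β - 1) * C)⁻¹ * f a ^ (1 - β) := by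
  have hG : AntitoneOn (fun s => f s ^ (1 - β) + (β - 1) * C * s) (Icc a b) := by
    refine antitoneOn_Icc_of_hasDerivAt_nonpos
      ((hf.rpow_const fun t ht => Or.inl (hpos t ht).ne').add
        (continuousOn_const.mul continuousOn_id))
      (fun t ht => ((hf' t ht).rpow_const (Or.inl (hpos t (Ioo_subset_Icc_self ht)).ne')).add
        ((hasDerivAt_id t).const_mul _))
      fun t ht => ?_
    have hft := hpos t (Ioo_subset_Icc_self ht)
    have hC' : C ≤ f' t / f t ^ β := (le_div_iff₀ (Real.rpow_pos_of_pos hft β)).2 (hlow t ht)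
    have h : f' t * (1 - β) * f t ^ (1 - β - 1) + (β - 1) * C * 1 =
        (β - 1) * (C - f' t / f t ^ β) := by
      rw [show 1 - β - 1 = -β by ring, Real.rpow_neg hft.le]
      ring
    rw [h]
    exact mul_nonpos_of_nonneg_of_nonpos (by linarith) (by linarith)
  have hGab := hG (left_mem_Icc.2 hab) (right_mem_Icc.2 hab) hab
  simp only at hGab
  have hfb : 0 < f b ^ (1 - β) := Real.rpow_pos_of_pos (hpos b (right_mem_Icc.2 hab)) _
  rw [← div_eq_inv_mul, lt_div_iff₀ (mul_pos (by linarith) hC)]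
  nlinarith

theorem sub_two_mul_lt_of_mul_rpow_le_deriv_deriv (hf : ContinuousOn f (Icc a b))
    (hf'c : ContinuousOn f' (Icc a b)) (hf' : ∀ t ∈ Ioo a b, HasDerivAt f (f' t) t)
    (hf'' : ∀ t ∈ Ioo a b, HasDerivAt f' (f'' t) t) {K q : ℝ} (hK : 0 < K) (hq : 2 < q)
    (ha : 0 < a) (hfa : 0 < f a) (hf'pos : ∀ t ∈ Icc a b, 0 < f' t) (htan : f a ≤ a * f' a)
    (hf''ge : ∀ t ∈ Ioo a b, K * f t ^ (q - 1) ≤ f'' t) :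
    b - 2 * a < ((q / 2 - 1) * √(2 * K / q * (1 - 2 ^ (-q))))⁻¹ * (2 * f a) ^ (1 - q / 2) := by
  set C := √(2 * K / q * (1 - 2 ^ (-q)))
  have hC : 0 < C := Real.sqrt_pos.2 (mul_pos (by positivity)
    (sub_pos.2 (Real.rpow_lt_one_of_one_lt_of_neg one_lt_two (by linarith))))
  have hβ : 0 < q / 2 - 1 := by linarith
  rcases lt_or_ge b (2 * a) with hb | hb
  · have h2fa : 0 < 2 * f a := by positivity
    have := mul_pos (inv_pos.2 (mul_pos hβ hC)) (Real.rpow_pos_of_pos h2fa (1 - q / 2))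
    linarith
  have ha_mem : a ∈ Icc a b := left_mem_Icc.2 (by linarith)
  have h2a_mem : 2 * a ∈ Icc a b := ⟨by linarith, hb⟩
  have hsub : Icc (2 * a) b ⊆ Icc a b := Icc_subset_Icc_left (by linarith)
  have hmono : MonotoneOn f (Icc a b) := monotoneOn_Icc_of_hasDerivAt_nonneg hf hf'
    fun t ht => (hf'pos t (Ioo_subset_Icc_self ht)).le
  have hpos : ∀ t ∈ Icc a b, 0 < f t := fun t ht => hfa.trans_le (hmono ha_mem ht ht.1)
  have hf'mono : MonotoneOn f' (Icc a b) := monotoneOn_Icc_of_hasDerivAt_nonneg hf'c hf''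
    fun t ht => le_trans (by have := hpos t (Ioo_subset_Icc_self ht); positivity) (hf''ge t ht)
  have hdouble : 2 * f a ≤ f (2 * a) := by
    have := mul_sub_le_sub_of_monotoneOn_deriv hf hf' hf'mono h2a_mem
    linarith
  have hE := monotoneOn_sq_sub_rpow_of_mul_rpow_le hf hf'c hf' hf'' (by positivity) hpos
    (fun t ht => (hf'pos t (Ioo_subset_Icc_self ht)).le) hf''ge
  have hlow : ∀ t ∈ Ioo (2 * a) b, C * f t ^ (q / 2) ≤ f' t := fun t ht =>
    have ht' := hsub (Ioo_subset_Icc_self ht)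
    sqrt_mul_rpow_half_le (by positivity) (by positivity) hfa.le
      (hdouble.trans (hmono h2a_mem ht' ht.1.le)) (hf'pos t ht').le (hE ha_mem ht' ht'.1)
  have hblow := sub_lt_of_mul_rpow_le_deriv (hf.mono hsub)
    (fun t ht => hf' t (Ioo_subset_Ioo_left (by linarith) ht)) (fun t ht => hpos t (hsub ht))
    hC (by linarith) hb hlow
  have hrpow : f (2 * a) ^ (1 - q / 2) ≤ (2 * f a) ^ (1 - q / 2) :=
    Real.rpow_le_rpow_of_nonpos (by positivity) hdouble (by linarith)
  have := mul_le_mul_of_nonneg_left hrpow (inv_pos.2 (mul_pos hβ hC)).le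
  linarith

end Interval

theorem ode_blowup_lemma_general (p K Tb : ℝ) (S : EReal) (hp : 1 < p) (hK : 0 < K)
    (hTb : 0 < Tb) (H : ℝ → ℝ)
    (hsm : ContDiffOn ℝ 2 H {t : ℝ | Tb ≤ t ∧ (t : EReal) < S})
    (hHT : 0 < H Tb)
    (hH' : ∀ t : ℝ, Tb ≤ t → (t : EReal) < S → 0 < derivWithin H (Set.Ici Tb) t)
    (hTH : H Tb ≤ Tb * derivWithin H (Set.Ici Tb) Tb)
    (hineq : ∀ t : ℝ, Tb ≤ t → (t : EReal) < S →
      K * H t ^ ((p + 1) / 2) ≤ derivWithin (derivWithin H (Set.Ici Tb)) (Set.Ici Tb) t) :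
    S ≤ ((2 * Tb + 4 / (p - 1) *
      (4 * K * (1 - (2 : ℝ) ^ (-((p + 3) / 2))) / (p + 3)) ^ (-(1 / 2) : ℝ) *
      (2 * H Tb) ^ (-((p - 1) / 4)) : ℝ) : EReal) := by
  by_contra! hlt
  obtain ⟨T, hBT, hTS⟩ := EReal.lt_iff_exists_real_btwn.1 hlt
  rw [EReal.coe_lt_coe_iff] at hBT
  have hTV : Icc Tb T ⊆ {t : ℝ | (t : EReal) < S} := fun t ht =>
    (EReal.coe_le_coe_iff.2 ht.2).trans_lt hTS
  obtain ⟨hHc, hH'c, hHd, hH'd⟩ := hsm.hasDerivAt_derivWithin_Ici_of_Icc_subset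
    (isOpen_Iio.preimage continuous_coe_real_ereal) hTV
  have hblow := sub_two_mul_lt_of_mul_rpow_le_deriv_deriv hHc hH'c hHd hH'd hK
    (q := (p + 3) / 2) (by linarith) hTb hHT (fun t ht => hH' t ht.1 (hTV ht)) hTH
    fun t ht => by
      rw [show (p + 3) / 2 - 1 = (p + 1) / 2 by ring]
      exact hineq t ht.1.le (hTV (Ioo_subset_Icc_self ht))
  have hc : 0 ≤ 4 * K * (1 - 2 ^ (-((p + 3) / 2))) / (p + 3) := div_nonneg (mul_nonneg
    (by positivity) (sub_nonneg.2 (Real.rpow_le_one_of_one_le_of_nonpos one_le_two (by linarith))))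
    (by linarith)
  have hconst : ((p + 3) / 2 / 2 - 1) * √(2 * K / ((p + 3) / 2) * (1 - 2 ^ (-((p + 3) / 2)))) =
      (4 / (p - 1) * (4 * K * (1 - 2 ^ (-((p + 3) / 2))) / (p + 3)) ^ (-(1 / 2) : ℝ))⁻¹ := by
    rw [Real.rpow_neg hc, ← Real.sqrt_eq_rpow, mul_inv, inv_inv, inv_div]
    congr 1
    · ring
    · congr 1; field_simp; ring
  rw [hconst, inv_inv, show 1 - (p + 3) / 2 / 2 = -((p - 1) / 4) by ring] at hblow
  linarith

/-- Blow-up for `H'' ≥ K H^{(p+1)/2}`: let `p > 1`, `K > 0`, `T̄ > 0`, `S ∈ (T̄, ∞]`, and let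
`H` be `C²` on `[T̄, S)` with `H(T̄) > 0`, `H' > 0` on `[T̄, S)`, `T̄ H'(T̄) ≥ H(T̄)` and
`H''(t) ≥ K H(t)^{(p+1)/2}` on `[T̄, S)` (one-sided derivatives on `[T̄, ∞)`). Then
`S ≤ 2T̄ + (4/(p-1)) ((4K(1 - 2^{-(p+3)/2}))/(p+3))^{-1/2} (2H(T̄))^{-(p-1)/4}`;
in particular `S` is finite. -/
theorem ode_blowup_lemma (p K Tb : ℝ) (S : EReal) (hp : 1 < p) (hK : 0 < K)
    (hTb : 0 < Tb) (hS : (Tb : EReal) < S) (H : ℝ → ℝ)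
    (hsm : ContDiffOn ℝ 2 H {t : ℝ | Tb ≤ t ∧ (t : EReal) < S})
    (hHT : 0 < H Tb)
    (hH' : ∀ t : ℝ, Tb ≤ t → (t : EReal) < S → 0 < derivWithin H (Set.Ici Tb) t)
    (hTH : H Tb ≤ Tb * derivWithin H (Set.Ici Tb) Tb)
    (hineq : ∀ t : ℝ, Tb ≤ t → (t : EReal) < S →
      K * H t ^ ((p + 1) / 2) ≤ derivWithin (derivWithin H (Set.Ici Tb)) (Set.Ici Tb) t) :
    S ≤ ((2 * Tb + 4 / (p - 1) *
      (4 * K * (1 - (2 : ℝ) ^ (-((p + 3) / 2))) / (p + 3)) ^ (-(1 / 2) : ℝ) *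
      (2 * H Tb) ^ (-((p - 1) / 4)) : ℝ) : EReal) :=
  ode_blowup_lemma_general p K Tb S hp hK hTb H hsm hHT hH' hTH hineq
end

section
/- Let β ≥ 0, 0 < R₀ < R, and let F : [0, ∞) × ℝ → [0, ∞) be measurable. Then for every t ≥ (R − R₀)/2, ∫_{t+R₀}^{t+R} r^{−β} ∫_0^t ∫_{r−t+τ}^{r+t−τ} F(τ, λ) dλ dτ dr ≥ (t + R)^{−β−1} ∫_0^t ∫_{τ+R₀}^{τ+R} (t − τ)(λ − τ − R₀) F(τ, λ) dλ dτ. -/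
open Set MeasureTheory

/-- Arithmetic core: the length of the intersection interval dominates the weight. -/
lemma len_lower_aux (R₀ R t τ l : ℝ) (hR₀ : 0 < R₀) (hR : R₀ < R)
    (ht : (R - R₀) / 2 ≤ t) (hτ0 : 0 ≤ τ) (hτt : τ ≤ t)
    (hl1 : τ + R₀ ≤ l) (hl2 : l ≤ τ + R) :
    (t + R)⁻¹ * ((t - τ) * (l - τ - R₀))
      ≤ min (l + t - τ) (t + R) - max (l - t + τ) (t + R₀) := by
  have hP : 0 < t + R := by nlinarith
  rw [inv_mul_eq_div, div_le_iff₀ hP]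
  have ha : (0:ℝ) ≤ t - τ := by linarith
  have hb : (0:ℝ) ≤ l - τ - R₀ := by linarith
  rcases max_cases (l - t + τ) (t + R₀) with ⟨h1, h2⟩ | ⟨h1, h2⟩ <;>
    rcases min_cases (l + t - τ) (t + R) with ⟨h3, h4⟩ | ⟨h3, h4⟩ <;>
      rw [h1, h3] <;>
        nlinarith [mul_nonneg ha hb, mul_nonneg ha (by nlinarith : (0:ℝ) ≤ 2*(t+R) - (l - τ - R₀)),
          mul_nonneg hb (by nlinarith : (0:ℝ) ≤ R + τ),
          mul_nonneg (by nlinarith : (0:ℝ) ≤ R - R₀ - (l - τ - R₀)) hP.le,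
          mul_nonneg hb (by nlinarith : (0:ℝ) ≤ (t + R) - (t - τ))]

/-- Rammaha-type integral inequality: for `β ≥ 0`, `0 < R₀ < R`, a nonnegative measurable
`F` and any `t ≥ (R - R₀)/2`,
`∫_{t+R₀}^{t+R} r^{-β} ∫_0^t ∫_{r-t+τ}^{r+t-τ} F(τ, λ) dλ dτ dr
  ≥ (t+R)^{-β-1} ∫_0^t ∫_{τ+R₀}^{τ+R} (t-τ)(λ-τ-R₀) F(τ, λ) dλ dτ`
(all integrals are Lebesgue integrals). -/
theorem weighted_integral_inequality (β R₀ R : ℝ) (hβ : 0 ≤ β) (hR₀ : 0 < R₀) (hR : R₀ < R)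
    (F : ℝ → ℝ → ℝ) (hF : Measurable (Function.uncurry F))
    (hFnonneg : ∀ τ l : ℝ, 0 ≤ F τ l)
    (t : ℝ) (ht : (R - R₀) / 2 ≤ t) :
    ENNReal.ofReal ((t + R) ^ (-β - 1)) *
      ∫⁻ τ in Set.Icc 0 t, ∫⁻ l in Set.Icc (τ + R₀) (τ + R),
        ENNReal.ofReal ((t - τ) * (l - τ - R₀)) * ENNReal.ofReal (F τ l)
    ≤ ∫⁻ r in Set.Icc (t + R₀) (t + R), ENNReal.ofReal (r ^ (-β)) *
        ∫⁻ τ in Set.Icc 0 t, ∫⁻ l in Set.Icc (r - t + τ) (r + t - τ),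
          ENNReal.ofReal (F τ l) := by
  have ht0 : 0 < t := by nlinarith
  have hP : 0 < t + R := by nlinarith
  have hA : 0 < t + R₀ := by nlinarith
  set g : (ℝ × ℝ) × ℝ → ENNReal := fun q =>
    Set.indicator {q : (ℝ × ℝ) × ℝ | q.1.1 - t + q.1.2 ≤ q.2 ∧ q.2 ≤ q.1.1 + t - q.1.2}
      (fun q => ENNReal.ofReal (F q.1.2 q.2)) q with hgdef
  have hset : MeasurableSet
      {q : (ℝ × ℝ) × ℝ | q.1.1 - t + q.1.2 ≤ q.2 ∧ q.2 ≤ q.1.1 + t - q.1.2} := by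
    have h1 : MeasurableSet {q : (ℝ × ℝ) × ℝ | q.1.1 - t + q.1.2 ≤ q.2} :=
      measurableSet_le (by fun_prop) measurable_snd
    have h2 : MeasurableSet {q : (ℝ × ℝ) × ℝ | q.2 ≤ q.1.1 + t - q.1.2} :=
      measurableSet_le measurable_snd (by fun_prop)
    exact h1.inter h2
  have hFm : Measurable fun q : (ℝ × ℝ) × ℝ => ENNReal.ofReal (F q.1.2 q.2) := by
    have : Measurable fun q : (ℝ × ℝ) × ℝ => F q.1.2 q.2 :=
      hF.comp (measurable_fst.snd.prodMk measurable_snd)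
    exact ENNReal.measurable_ofReal.comp this
  have hg : Measurable g := hFm.indicator hset
  -- the inner integral over l as an integral over ℝ of g
  have hinner : ∀ r τ : ℝ,
      (∫⁻ l in Set.Icc (r - t + τ) (r + t - τ), ENNReal.ofReal (F τ l))
        = ∫⁻ l, g ((r, τ), l) := by
    intro r τ
    rw [← lintegral_indicator measurableSet_Icc]
    refine lintegral_congr fun l => ?_
    simp only [hgdef, Set.indicator_apply, Set.mem_Icc, Set.mem_setOf_eq]
  -- swap r with τ
  have swap1 :
      (∫⁻ r in Set.Icc (t + R₀) (t + R), ∫⁻ τ in Set.Icc 0 t, ∫⁻ l, g ((r, τ), l))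
        = ∫⁻ τ in Set.Icc 0 t, ∫⁻ r in Set.Icc (t + R₀) (t + R), ∫⁻ l, g ((r, τ), l) :=
    lintegral_lintegral_swap (hg.lintegral_prod_right'.aemeasurable)
  -- swap r with l for fixed τ
  have swap2 : ∀ τ : ℝ,
      (∫⁻ r in Set.Icc (t + R₀) (t + R), ∫⁻ l, g ((r, τ), l))
        = ∫⁻ l, ∫⁻ r in Set.Icc (t + R₀) (t + R), g ((r, τ), l) := by
    intro τ
    exact lintegral_lintegral_swap
      ((hg.comp ((measurable_fst.prodMk measurable_const).prodMk measurable_snd)).aemeasurable)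
  -- compute the r-integral
  have hcompute : ∀ τ l : ℝ,
      (∫⁻ r in Set.Icc (t + R₀) (t + R), g ((r, τ), l))
        = ENNReal.ofReal (F τ l) *
            ENNReal.ofReal (min (l + t - τ) (t + R) - max (l - t + τ) (t + R₀)) := by
    intro τ l
    have heq : (fun r => g ((r, τ), l))
        = (Set.Icc (l - t + τ) (l + t - τ)).indicator
            (fun _ => ENNReal.ofReal (F τ l)) := by
      funext r
      have hiff : (r - t + τ ≤ l ∧ l ≤ r + t - τ) ↔ (l - t + τ ≤ r ∧ r ≤ l + t - τ) := by
        constructor <;> rintro ⟨h1, h2⟩ <;> exact ⟨by linarith, by linarith⟩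
      simp only [hgdef, Set.indicator_apply, Set.mem_Icc, Set.mem_setOf_eq, hiff]
    rw [heq, lintegral_indicator measurableSet_Icc, setLIntegral_const,
      Measure.restrict_apply measurableSet_Icc, Set.Icc_inter_Icc, Real.volume_Icc]
  -- the core inequality
  have core :
      ENNReal.ofReal ((t + R)⁻¹) *
        (∫⁻ τ in Set.Icc 0 t, ∫⁻ l in Set.Icc (τ + R₀) (τ + R),
          ENNReal.ofReal ((t - τ) * (l - τ - R₀)) * ENNReal.ofReal (F τ l))
      ≤ ∫⁻ r in Set.Icc (t + R₀) (t + R), ∫⁻ τ in Set.Icc 0 t,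
          ∫⁻ l in Set.Icc (r - t + τ) (r + t - τ), ENNReal.ofReal (F τ l) := by
    have hrw : (∫⁻ r in Set.Icc (t + R₀) (t + R), ∫⁻ τ in Set.Icc 0 t,
          ∫⁻ l in Set.Icc (r - t + τ) (r + t - τ), ENNReal.ofReal (F τ l))
        = ∫⁻ τ in Set.Icc 0 t, ∫⁻ l, ENNReal.ofReal (F τ l) *
            ENNReal.ofReal (min (l + t - τ) (t + R) - max (l - t + τ) (t + R₀)) := by
      simp_rw [hinner]
      rw [swap1]
      congr 1
      funext τ
      rw [swap2 τ]
      congr 1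
      funext l
      exact hcompute τ l
    rw [hrw, ← lintegral_const_mul' _ _ ENNReal.ofReal_ne_top]
    apply setLIntegral_mono' measurableSet_Icc
    intro τ hτ
    rw [← lintegral_const_mul' _ _ ENNReal.ofReal_ne_top]
    refine le_trans (setLIntegral_mono' measurableSet_Icc ?_)
      (setLIntegral_le_lintegral _ _)
    intro l hl
    rw [← mul_assoc, ← ENNReal.ofReal_mul (by positivity)]
    rw [mul_comm (ENNReal.ofReal (F τ l))]
    apply mul_le_mul_left
    apply ENNReal.ofReal_le_ofReal
    exact len_lower_aux R₀ R t τ l hR₀ hR ht hτ.1 hτ.2 hl.1 hl.2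
  -- put everything together
  calc ENNReal.ofReal ((t + R) ^ (-β - 1)) *
        (∫⁻ τ in Set.Icc 0 t, ∫⁻ l in Set.Icc (τ + R₀) (τ + R),
          ENNReal.ofReal ((t - τ) * (l - τ - R₀)) * ENNReal.ofReal (F τ l))
      = ENNReal.ofReal ((t + R) ^ (-β)) * (ENNReal.ofReal ((t + R)⁻¹) *
          (∫⁻ τ in Set.Icc 0 t, ∫⁻ l in Set.Icc (τ + R₀) (τ + R),
            ENNReal.ofReal ((t - τ) * (l - τ - R₀)) * ENNReal.ofReal (F τ l))) := by
        rw [show (-β - 1 : ℝ) = -β + (-1) by ring, Real.rpow_add hP,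
          Real.rpow_neg_one (t + R), ENNReal.ofReal_mul (by positivity), mul_assoc]
    _ ≤ ENNReal.ofReal ((t + R) ^ (-β)) *
          (∫⁻ r in Set.Icc (t + R₀) (t + R), ∫⁻ τ in Set.Icc 0 t,
            ∫⁻ l in Set.Icc (r - t + τ) (r + t - τ), ENNReal.ofReal (F τ l)) :=
        mul_le_mul_right core _
    _ = ∫⁻ r in Set.Icc (t + R₀) (t + R), ENNReal.ofReal ((t + R) ^ (-β)) *
          ∫⁻ τ in Set.Icc 0 t, ∫⁻ l in Set.Icc (r - t + τ) (r + t - τ),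
            ENNReal.ofReal (F τ l) :=
        (lintegral_const_mul' _ _ ENNReal.ofReal_ne_top).symm
    _ ≤ ∫⁻ r in Set.Icc (t + R₀) (t + R), ENNReal.ofReal (r ^ (-β)) *
          ∫⁻ τ in Set.Icc 0 t, ∫⁻ l in Set.Icc (r - t + τ) (r + t - τ),
            ENNReal.ofReal (F τ l) := by
        apply setLIntegral_mono' measurableSet_Icc
        intro r hr
        exact mul_le_mul_left (ENNReal.ofReal_le_ofReal
          (Real.rpow_le_rpow_of_nonpos (lt_of_lt_of_le hA hr.1) hr.2 (neg_nonpos.2 hβ))) _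
end
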